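/- (No forced surjection from ℕ onto P(ℕ)) Let (ℙ,≤) be a partial order with the hereditary-subsets topology and p ∈ ℙ. Then ⊩_p ¬∃f (f ⊆ (ℕ×P(ℕ))^(p) ∧ 'f is a function' ∧ 'f is onto'). Likewise ⊩_p ¬∃f (f ⊆ P(ℕ)^(p) × P(P(ℕ))^(p) ∧ 'f is a function' ∧ 'f is onto'). -/

import Mathlib

set_option linter.unusedVariables false

noncomputable section

/-- Names for the cumulative hierarchy of variable sets over a partial order `P`:
a name based at `p` assigns to every `q` a family of names (intended to be based at `q`). -/
inductive VName (P : Type) : Type 1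
  | mk (base : P) (ι : P → Type) (el : ∀ q : P, ι q → VName P)

namespace VName

variable {P : Type}

/-- The base node of a name. -/
def base : VName P → P
  | mk p _ _ => p

/-- Restriction `f ↾ [r)` of a name to the cone above `r`. -/
def restrictN [Preorder P] : VName P → P → VName P
  | mk _ ι el, r => mk r (fun q => ι q × PLift (r ≤ q)) (fun q x => el q x.1)

/-- Extensional (hereditary) equality of names: this is the equality of the variable
sets (set valued functions on `[p)`) that the names denote. -/
def Equiv : VName P → VName P → Prop
  | mk p ι el, mk p' ι' el' =>
      p = p' ∧ ∀ q : P, (∀ i : ι q, ∃ j : ι' q, Equiv (el q i) (el' q j)) ∧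
        (∀ j : ι' q, ∃ i : ι q, Equiv (el q i) (el' q j))

theorem Equiv.refl : ∀ a : VName P, Equiv a a
  | mk _ ι el => ⟨rfl, fun q => ⟨fun i => ⟨i, Equiv.refl (el q i)⟩,
      fun j => ⟨j, Equiv.refl (el q j)⟩⟩⟩

theorem Equiv.symm : ∀ {a b : VName P}, Equiv a b → Equiv b a
  | mk _ _ el, mk _ _ el', ⟨hp, h⟩ =>
      ⟨hp.symm, fun q =>
        ⟨fun j => let ⟨i, hi⟩ := (h q).2 j; ⟨i, Equiv.symm hi⟩,
         fun i => let ⟨j, hj⟩ := (h q).1 i; ⟨j, Equiv.symm hj⟩⟩⟩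

theorem Equiv.trans : ∀ {a b c : VName P}, Equiv a b → Equiv b c → Equiv a c
  | mk _ _ el, mk _ _ el', mk _ _ el'', ⟨hp, h⟩, ⟨hp', h'⟩ =>
      ⟨hp.trans hp', fun q =>
        ⟨fun i => let ⟨j, hj⟩ := (h q).1 i; let ⟨k, hk⟩ := (h' q).1 j; ⟨k, Equiv.trans hj hk⟩,
         fun k => let ⟨j, hj⟩ := (h' q).2 k; let ⟨i, hi⟩ := (h q).2 j; ⟨i, Equiv.trans hi hj⟩⟩⟩

instance setoid (P : Type) : Setoid (VName P) :=
  ⟨Equiv, Equiv.refl, Equiv.symm, Equiv.trans⟩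

end VName

/-- Variable sets over `P`: names modulo extensional equality. -/
abbrev VSet (P : Type) : Type 1 := Quotient (VName.setoid P)

namespace VSet

variable {P : Type}

/-- The base node. -/
def base : VSet P → P :=
  Quotient.lift VName.base (fun a b h => by cases a; cases b; exact h.1)

/-- The value of a name at a node, as a set of variable sets. -/
def elemsN : VName P → P → Set (VSet P)
  | .mk _ ι el, q => Set.range fun i : ι q => (⟦el q i⟧ : VSet P)

theorem elemsN_congr : ∀ {a b : VName P}, VName.Equiv a b → elemsN a = elemsN b
  | .mk _ ι el, .mk _ ι' el', ⟨_, h⟩ => by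
      funext q
      ext x
      constructor
      · rintro ⟨i, rfl⟩
        obtain ⟨j, hj⟩ := (h q).1 i
        exact ⟨j, (Quotient.sound hj).symm⟩
      · rintro ⟨j, rfl⟩
        obtain ⟨i, hi⟩ := (h q).2 j
        exact ⟨i, Quotient.sound hi⟩

/-- `f.elems q` is the value `f(q)` of the variable set `f` at the node `q`. -/
def elems : VSet P → P → Set (VSet P) :=
  Quotient.lift elemsN fun _ _ h => elemsN_congr h

theorem restrictN_congr [Preorder P] (r : P) :
    ∀ {a b : VName P}, VName.Equiv a b → VName.Equiv (a.restrictN r) (b.restrictN r)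
  | .mk _ _ el, .mk _ _ el', ⟨_, h⟩ =>
      ⟨rfl, fun q =>
        ⟨fun i => let ⟨j, hj⟩ := (h q).1 i.1; ⟨⟨j, i.2⟩, hj⟩,
         fun j => let ⟨i, hi⟩ := (h q).2 j.1; ⟨⟨i, j.2⟩, hi⟩⟩⟩

/-- Restriction `f ↾ [r)`. -/
def restrict [Preorder P] (f : VSet P) (r : P) : VSet P :=
  Quotient.lift (fun a : VName P => (⟦a.restrictN r⟧ : VSet P))
    (fun _ _ h => Quotient.sound (restrictN_congr r h)) f

end VSet

namespace VName

variable {P : Type}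

/-- A name is *good* if it denotes an element of the cumulative hierarchy of variable
sets: its value at each `q` consists of good names based at `q`, it has empty value
outside of the cone of its base, and it is coherent under restrictions
(`g ∈ f(q)` and `q ≤ r` imply `g ↾ [r) ∈ f(r)`). -/
def GoodN [Preorder P] : VName P → Prop
  | .mk p ι el =>
      (∀ q : P, Nonempty (ι q) → p ≤ q) ∧
      (∀ (q : P) (i : ι q), (el q i).base = q ∧ GoodN (el q i)) ∧
      (∀ (q : P) (i : ι q) (r : P), q ≤ r →
        ∃ j : ι r, VName.Equiv ((el q i).restrictN r) (el r j))

end VName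

/-- `Vp p` is the universe `V(p) = ⋃_α V_α(p)` of variable sets at the node `p`. -/
def Vp {P : Type} [Preorder P] (p : P) : Set (VSet P) :=
  {f | ∃ a : VName P, VName.GoodN a ∧ a.base = p ∧ ⟦a⟧ = f}

/-- Membership forced at `p`: `⊩ₚ a ∈ f` iff `a ∈ f(p)`. -/
def memAt {P : Type} [Preorder P] (p : P) (a f : VSet P) : Prop := a ∈ f.elems p

namespace VSet

variable {P : Type}

/-- Internal unordered pair `{a, b}` based at `q` (name level). -/
def upairN [Preorder P] (q : P) (a b : VName P) : VName P :=
  .mk q (fun r => Bool × PLift (q ≤ r))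
    (fun r x => if x.1 then a.restrictN r else b.restrictN r)

/-- Internal (Kuratowski) ordered pair `(a, b)` based at `q` (name level);
its value at `r` is `{{a}↾[r), {a,b}↾[r)}`. -/
def pairN [Preorder P] (q : P) (a b : VName P) : VName P :=
  .mk q (fun r => Bool × PLift (q ≤ r))
    (fun r x => if x.1 then (upairN q a a).restrictN r else (upairN q a b).restrictN r)

/-- Internal ordered pair `(a, b)` based at `q`. -/
def pairV [Preorder P] (q : P) (a b : VSet P) : VSet P := ⟦pairN q a.out b.out⟧

/-- Internal cartesian product (name level): `(f × g)(r) = {(a,b) : a ∈ f(r), b ∈ g(r)}`. -/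
def prodN [Preorder P] (q : P) : VName P → VName P → VName P
  | .mk _ ι el, .mk _ ι' el' =>
      .mk q (fun r => (ι r × ι' r) × PLift (q ≤ r))
        (fun r x => pairN r (el r x.1.1) (el' r x.1.2))

/-- Internal cartesian product `A × B` based at `q`. -/
def prodV [Preorder P] (q : P) (A B : VSet P) : VSet P := ⟦prodN q A.out B.out⟧

/-- Internal successor (name level): `Suc(f)(q) = {f↾[q)} ∪ f(q)`. -/
def sucN [Preorder P] : VName P → VName P
  | .mk p ι el =>
      .mk p (fun q => ι q ⊕ PLift (p ≤ q))
        (fun q x => Sum.elim (el q) (fun _ => (VName.mk p ι el).restrictN q) x)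

/-- Internal successor `Suc(f)`. -/
def sucV [Preorder P] (f : VSet P) : VSet P := ⟦sucN f.out⟧

/-- The name `â(p)` of an external set (given by a `PSet`): `â(p)(q) = {b̂(q) : b ∈ a}`. -/
def hatN [Preorder P] : PSet → P → VName P
  | ⟨_, A⟩, p => .mk p (fun q => _ × PLift (p ≤ q)) (fun q x => hatN (A x.1) q)

/-- The variable set `â(p)` associated to an external set `a`. -/
def hatV [Preorder P] (a : ZFSet) (p : P) : VSet P := ⟦hatN a.out p⟧

end VSet

/-- The von Neumann natural `n` as a `ZFSet`. -/
def natToZF : ℕ → ZFSet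
  | 0 => ∅
  | n + 1 => insert (natToZF n) (natToZF n)


/-- First-order formulas of set theory (with de Bruijn variables `Fin n`), together
with an ordered-pair atom `isPair i j k` ("xᵢ = (xⱼ, xₖ)") and a pair-membership atom
`pairMem i j k` ("(xᵢ, xⱼ) ∈ xₖ"). -/
inductive SetFml : ℕ → Type
  | mem {n} (i j : Fin n) : SetFml n
  | eq {n} (i j : Fin n) : SetFml n
  | isPair {n} (i j k : Fin n) : SetFml n
  | pairMem {n} (i j k : Fin n) : SetFml n
  | and {n} (f g : SetFml n) : SetFml n
  | or {n} (f g : SetFml n) : SetFml n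
  | imp {n} (f g : SetFml n) : SetFml n
  | not {n} (f : SetFml n) : SetFml n
  | ex {n} (f : SetFml (n + 1)) : SetFml n
  | all {n} (f : SetFml (n + 1)) : SetFml n

namespace SetFml

/-- Biconditional. -/
def iff {n} (f g : SetFml n) : SetFml n := .and (.imp f g) (.imp g f)

/-- Relabelling of free variables (weakening/substitution of variables). -/
def relabel : ∀ {n m : ℕ}, (Fin n → Fin m) → SetFml n → SetFml m
  | _, _, g, .mem i j => .mem (g i) (g j)
  | _, _, g, .eq i j => .eq (g i) (g j)
  | _, _, g, .isPair i j k => .isPair (g i) (g j) (g k)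
  | _, _, g, .pairMem i j k => .pairMem (g i) (g j) (g k)
  | _, _, g, .and f₁ f₂ => .and (relabel g f₁) (relabel g f₂)
  | _, _, g, .or f₁ f₂ => .or (relabel g f₁) (relabel g f₂)
  | _, _, g, .imp f₁ f₂ => .imp (relabel g f₁) (relabel g f₂)
  | _, _, g, .not f => .not (relabel g f)
  | _, _, g, .ex f => .ex (relabel (Fin.cases 0 fun i => (g i).succ) f)
  | _, _, g, .all f => .all (relabel (Fin.cases 0 fun i => (g i).succ) f)

/-- Universal closure of a formula. -/
def closeAll : ∀ {n : ℕ}, SetFml n → SetFml 0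
  | 0, f => f
  | _ + 1, f => closeAll (.all f)

/-- Classical realization of a set-theoretic formula in a structure `(M, E)`. -/
def RealizeIn {M : Type*} (E : M → M → Prop) : ∀ {n}, SetFml n → (Fin n → M) → Prop
  | _, .mem i j, v => E (v i) (v j)
  | _, .eq i j, v => v i = v j
  | _, .isPair i j k, v =>
      ∀ u, E u (v i) ↔ ((∀ t, E t u ↔ t = v j) ∨ (∀ t, E t u ↔ (t = v j ∨ t = v k)))
  | _, .pairMem i j k, v =>
      ∃ w, E w (v k) ∧
        ∀ u, E u w ↔ ((∀ t, E t u ↔ t = v i) ∨ (∀ t, E t u ↔ (t = v i ∨ t = v j)))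
  | _, .and f g, v => RealizeIn E f v ∧ RealizeIn E g v
  | _, .or f g, v => RealizeIn E f v ∨ RealizeIn E g v
  | _, .imp f g, v => RealizeIn E f v → RealizeIn E g v
  | _, .not f, v => ¬ RealizeIn E f v
  | _, .ex f, v => ∃ a, RealizeIn E f (Fin.cons a v)
  | _, .all f, v => ∀ a, RealizeIn E f (Fin.cons a v)

end SetFml

/-- The sheaf forcing relation `⊩ₚ φ[σ₁,…,σₙ]` over the topology of hereditary
(upward closed) subsets of `P`: since `[p)` is the least open neighbourhood of `p`,
`¬`, `→`, `∀` are evaluated over all `q ≥ p`, and `∃` is witnessed in `V(p)`. -/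
def Forces {P : Type} [Preorder P] : ∀ {n : ℕ}, P → SetFml n → (Fin n → VSet P) → Prop
  | _, p, .mem i j, s => s i ∈ (s j).elems p
  | _, p, .eq i j, s => s i = s j
  | _, p, .isPair i j k, s => s i = VSet.pairV p (s j) (s k)
  | _, p, .pairMem i j k, s => VSet.pairV p (s i) (s j) ∈ (s k).elems p
  | _, p, .and f g, s => Forces p f s ∧ Forces p g s
  | _, p, .or f g, s => Forces p f s ∨ Forces p g s
  | _, p, .imp f g, s => ∀ q : P, p ≤ q →
      Forces q f (fun i => (s i).restrict q) → Forces q g (fun i => (s i).restrict q)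
  | _, p, .not f, s => ∀ q : P, p ≤ q → ¬ Forces q f (fun i => (s i).restrict q)
  | _, p, .ex f, s => ∃ σ ∈ Vp p, Forces p f (Fin.cons σ s)
  | _, p, .all f, s => ∀ q : P, p ≤ q → ∀ σ ∈ Vp q,
      Forces q f (Fin.cons σ fun i => (s i).restrict q)


namespace SetFml

/-- `xᵢ ⊆ xⱼ`. -/
def fSub {n} (i j : Fin n) : SetFml n := .all (.imp (.mem 0 i.succ) (.mem 0 j.succ))

/-- "`x_f` is a set of ordered pairs and is single valued" (`f` is a function). -/
def fIsFunction {n} (f : Fin n) : SetFml n :=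
  .and (.all (.imp (.mem 0 f.succ) (.ex (.ex (.isPair 2 1 0)))))
    (.all (.all (.all (.imp
      (.and (.pairMem 2 1 f.succ.succ.succ) (.pairMem 2 0 f.succ.succ.succ)) (.eq 1 0)))))

/-- "`x_f` is defined on every element of `x_a`". -/
def fTotal {n} (f a : Fin n) : SetFml n :=
  .all (.imp (.mem 0 a.succ) (.ex (.pairMem 1 0 f.succ.succ)))

/-- "`x_f` is onto `x_b`". -/
def fOnto {n} (f b : Fin n) : SetFml n :=
  .all (.imp (.mem 0 b.succ) (.ex (.pairMem 0 1 f.succ.succ)))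

/-- "`x_f` is injective". -/
def fInjective {n} (f : Fin n) : SetFml n :=
  .all (.all (.all (.imp
    (.and (.pairMem 2 0 f.succ.succ.succ) (.pairMem 1 0 f.succ.succ.succ)) (.eq 2 1))))

/-- "`x_f` is a function from `x_a` to `x_b`". -/
def fFuncFromTo {n} (f a b : Fin n) : SetFml n :=
  .and (.all (.imp (.mem 0 f.succ) (.ex (.ex (.and (.mem 1 a.succ.succ.succ)
      (.and (.mem 0 b.succ.succ.succ) (.isPair 2 1 0)))))))
    (.and (.all (.all (.all (.imp
        (.and (.pairMem 2 1 f.succ.succ.succ) (.pairMem 2 0 f.succ.succ.succ)) (.eq 1 0)))))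
      (fTotal f a))

/-- "`x_f` is an injective function from `x_a` to `x_b`". -/
def fInjFromTo {n} (f a b : Fin n) : SetFml n := .and (fFuncFromTo f a b) (fInjective f)

/-- "`x_f` is a surjective function from `x_a` onto `x_b`". -/
def fSurjFromTo {n} (f a b : Fin n) : SetFml n := .and (fFuncFromTo f a b) (fOnto f b)

/-- `|x_a| < |x_b|`: there is an injective function from `x_a` to `x_b` and
no surjective function from `x_a` onto `x_b`. -/
def fCardLt {n} (a b : Fin n) : SetFml n :=
  .and (.ex (fInjFromTo 0 a.succ b.succ)) (.not (.ex (fSurjFromTo 0 a.succ b.succ)))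

/-- "`x_S` is an inductive set" (contains the empty set, closed under successor). -/
def fInductive {n} (S : Fin n) : SetFml n :=
  .and (.ex (.and (.mem 0 S.succ) (.all (.not (.mem 0 1)))))
    (.all (.imp (.mem 0 S.succ) (.ex (.and (.mem 0 S.succ.succ)
      (.all (.iff (.mem 0 1) (.or (.mem 0 2) (.eq 0 2))))))))

/-- "`x_N` is the set of natural numbers" (the least inductive set). -/
def fIsNat {n} (N : Fin n) : SetFml n :=
  .and (fInductive N) (.all (.imp (fInductive 0) (fSub N.succ 0)))

/-- "`x_pw` is the power set of `x_x`". -/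
def fIsPow {n} (pw x : Fin n) : SetFml n := .all (.iff (.mem 0 pw.succ) (fSub 0 x.succ))

/-- `¬CH`: there is a set `B` with `|ℕ| < |B| < |P(ℕ)|`. -/
def negCHFml : SetFml 0 :=
  .ex (.ex (.ex (.and (fIsNat 2)
    (.and (fIsPow 1 2) (.and (fCardLt 2 0) (fCardLt 0 1))))))

/-! The axioms of `ZFC` as sentences (the axiom of foundation in its `¬¬` form and
the axiom of choice in the form `∀𝓕(∀x∀y φ → ¬¬ψ*)`). -/

/-- Axiom of existence of the empty set: `∃x∀y ¬(y ∈ x)`. -/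
def existsEmptyAx : SetFml 0 := .ex (.all (.not (.mem 0 1)))

/-- Axiom of extensionality: `∀x∀y(∀z(z ∈ x ↔ z ∈ y) → x = y)`. -/
def extAx : SetFml 0 :=
  .all (.all (.imp (.all (.iff (.mem 0 2) (.mem 0 1))) (.eq 1 0)))

/-- Axiom of pairing: `∀x∀y∃z∀w(w ∈ z ↔ (w = x ∨ w = y))`. -/
def pairAx : SetFml 0 :=
  .all (.all (.ex (.all (.iff (.mem 0 1) (.or (.eq 0 3) (.eq 0 2))))))

/-- Axiom of union: `∀𝓕∃A∀x(x ∈ A ↔ ∃Y(Y ∈ 𝓕 ∧ x ∈ Y))`. -/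
def unionAx : SetFml 0 :=
  .all (.ex (.all (.iff (.mem 0 1) (.ex (.and (.mem 0 3) (.mem 1 0))))))

/-- Axiom of power set: `∀x∃y∀z(z ∈ y ↔ ∀w(w ∈ z → w ∈ x))`. -/
def powAx : SetFml 0 :=
  .all (.ex (.all (.iff (.mem 0 1) (.all (.imp (.mem 0 1) (.mem 0 3))))))

/-- Axiom of infinity: there exists an inductive set. -/
def infAx : SetFml 0 :=
  .ex (.and (.ex (.and (.mem 0 1) (.all (.not (.mem 0 1)))))
    (.all (.imp (.mem 0 1) (.ex (.and (.mem 0 2)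
      (.all (.iff (.mem 0 1) (.or (.mem 0 2) (.eq 0 2)))))))))

/-- The matrix `x ∈ y ↔ (x ∈ z ∧ φ(x,z,w₁,…,wₙ))` of the comprehension axiom, in the
context `0 = x, 1 = y, 2 = z, 3+i = wᵢ`. -/
def compInner {n} (φ : SetFml (n + 2)) : SetFml (n + 3) :=
  .iff (.mem 0 1) (.and (.mem 0 2)
    (φ.relabel (Fin.cases 0 (Fin.cases 2 fun j => j.succ.succ.succ))))

/-- The comprehension axiom for `φ(x,z,w₁,…,wₙ)` (free variables `0 = x, 1 = z,
2+i = wᵢ`): `∀z∀w₁…∀wₙ∃y∀x(x ∈ y ↔ (x ∈ z ∧ φ))`. -/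
def compAx {n} (φ : SetFml (n + 2)) : SetFml 0 :=
  closeAll (.ex (.all (compInner φ)))

/-- `∀x(x ∈ A → ∃!y φ(x,y,A,w₁,…,wₙ))`, in the context `0 = A, 1+i = wᵢ`;
`φ` has free variables `0 = x, 1 = y, 2 = A, 3+i = wᵢ`. -/
def replHyp {n} (φ : SetFml (n + 3)) : SetFml (n + 1) :=
  .all (.imp (.mem 0 1) (.ex (.and
    (φ.relabel (Fin.cases 1 (Fin.cases 0 (Fin.cases 2 fun j => j.succ.succ.succ))))
    (.all (.imp
      (φ.relabel (Fin.cases 2 (Fin.cases 0 (Fin.cases 3 fun j => j.succ.succ.succ.succ))))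
      (.eq 0 1))))))

/-- `∃Y∀x(x ∈ A → ∃y(y ∈ Y ∧ φ(x,y,A,w⃗)))`, in the context `0 = A, 1+i = wᵢ`. -/
def replConcl {n} (φ : SetFml (n + 3)) : SetFml (n + 1) :=
  .ex (.all (.imp (.mem 0 2) (.ex (.and (.mem 0 2)
    (φ.relabel (Fin.cases 1 (Fin.cases 0 (Fin.cases 3 fun j => j.succ.succ.succ.succ))))))))

/-- The replacement axiom for `φ(x,y,A,w₁,…,wₙ)`. -/
def replAx {n} (φ : SetFml (n + 3)) : SetFml 0 :=
  closeAll (.imp (replHyp φ) (replConcl φ))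

/-- The axiom of foundation, in the (classically equivalent) `¬¬` form:
`¬∃x ¬(∃y(y ∈ x) → ∃y(y ∈ x ∧ ¬∃z(z ∈ x ∧ z ∈ y)))`. -/
def foundAx : SetFml 0 :=
  .not (.ex (.not (.imp (.ex (.mem 0 1))
    (.ex (.and (.mem 0 1) (.not (.ex (.and (.mem 0 2) (.mem 0 1)))))))))

/-- `φ := (x ∈ 𝓕 ∧ y ∈ 𝓕 → ((∃z(z ∈ x ∧ z ∈ y) → x = y) ∧ ∃z(z ∈ x)))`,
in the context `0 = y, 1 = x, 2 = 𝓕`. -/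
def acPhi : SetFml 3 :=
  .imp (.and (.mem 1 2) (.mem 0 2))
    (.and (.imp (.ex (.and (.mem 0 2) (.mem 0 1))) (.eq 1 0)) (.ex (.mem 0 2)))

/-- `ψ* := ∃E(x ∈ 𝓕 → ∃a(a ∈ E ∧ a ∈ x ∧ ∀b(b ∈ E ∧ b ∈ x → ¬¬(b = a))))`,
in the context `0 = y, 1 = x, 2 = 𝓕`. -/
def acPsiStar : SetFml 3 :=
  .ex (.imp (.mem 2 3) (.ex (.and (.mem 0 1) (.and (.mem 0 3)
    (.all (.imp (.and (.mem 0 2) (.mem 0 4)) (.not (.not (.eq 0 1)))))))))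

/-- The axiom of choice in the form `∀𝓕∀x∀y(φ → ¬¬ψ*)`. -/
def acAx : SetFml 0 := .all (.all (.all (.imp acPhi (.not (.not acPsiStar)))))

end SetFml

/-! A surjection forced at `q` is witnessed by some `f ∈ V(q)` whose value `f(q)` consists of
members of `(A × B)^(q)(q)`, i.e. of internal pairs `(â(q), b̂(q))` with `a ∈ A`, `b ∈ B`: the
hat map is injective and commutes with Kuratowski pairing, and internal pairs are injective.
Choosing for every `b ∈ B` some `a` with `(â(q), b̂(q)) ∈ f(q)` therefore gives an injection
`B → A` of external sets, since single-valuedness of `f` is forced at `q`. For `B = P(A)` this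
contradicts Cantor's theorem. -/

theorem Set.kuratowski_pair_inj {α : Type*} {a b a' b' : α}
    (h : ({{a}, {a, b}} : Set (Set α)) = {{a'}, {a', b'}}) : a = a' ∧ b = b' := by
  simp only [Set.pair_eq_pair_iff, Set.singleton_eq_singleton_iff] at h
  rcases h with ⟨rfl, h⟩ | ⟨h₁, h₂⟩
  · grind
  · have ha' : a' ∈ ({a} : Set α) := h₁ ▸ Set.mem_insert a' {b'}
    have hb' : b' ∈ ({a} : Set α) := h₁ ▸ Set.mem_insert_of_mem a' rfl
    have hb : b ∈ ({a'} : Set α) := h₂ ▸ Set.mem_insert_of_mem a rfl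
    simp only [Set.mem_singleton_iff] at ha' hb' hb
    grind

theorem ZFSet.not_exists_injective_powerset (x : ZFSet) :
    ¬ ∃ g : {b // b ∈ x.powerset} → {a // a ∈ x}, Function.Injective g := by
  rintro ⟨g, hg⟩
  let m : Set {a // a ∈ x} → {b // b ∈ x.powerset} := fun S =>
    ⟨ZFSet.sep (fun z => ∃ h : z ∈ x, ⟨z, h⟩ ∈ S) x,
      ZFSet.mem_powerset.2 fun _ hz => (ZFSet.mem_sep.1 hz).1⟩
  refine Function.cantor_injective (g ∘ m) (hg.comp fun S T hST => ?_)
  ext ⟨z, hz⟩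
  simpa [m, hz] using congrArg (z ∈ ·.1) hST

namespace VSet

variable {P : Type}

theorem ext {f g : VSet P} (hb : f.base = g.base) (he : ∀ r, f.elems r = g.elems r) :
    f = g := by
  induction f using Quotient.ind with | _ a => ?_
  induction g using Quotient.ind with | _ b => ?_
  obtain ⟨p, ι, el⟩ := a
  obtain ⟨p', ι', el'⟩ := b
  refine Quotient.sound (show VName.Equiv _ _ from ⟨hb, fun q => ⟨fun i => ?_, fun j => ?_⟩⟩)
  · obtain ⟨j, hj⟩ : (⟦el q i⟧ : VSet P) ∈ elems ⟦VName.mk p' ι' el'⟧ q := he q ▸ ⟨i, rfl⟩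
    exact ⟨j, Quotient.exact hj.symm⟩
  · obtain ⟨i, hi⟩ : (⟦el' q j⟧ : VSet P) ∈ elems ⟦VName.mk p ι el⟧ q := (he q).symm ▸ ⟨j, rfl⟩
    exact ⟨i, Quotient.exact hi⟩

variable [Preorder P]

theorem restrict_eq_mk_out (f : VSet P) (r : P) : f.restrict r = ⟦f.out.restrictN r⟧ := by
  conv_lhs => rw [← Quotient.out_eq f]
  rfl

theorem base_restrict (f : VSet P) (r : P) : (f.restrict r).base = r := by
  induction f using Quotient.ind with | _ a => obtain ⟨p, ι, el⟩ := a; rfl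

theorem elems_restrict (f : VSet P) (r s : P) :
    (f.restrict r).elems s = {x | r ≤ s ∧ x ∈ f.elems s} := by
  induction f using Quotient.ind with | _ a => ?_
  obtain ⟨p, ι, el⟩ := a
  ext x
  constructor
  · rintro ⟨⟨i, ⟨h⟩⟩, rfl⟩
    exact ⟨h, i, rfl⟩
  · rintro ⟨h, i, rfl⟩
    exact ⟨⟨i, ⟨h⟩⟩, rfl⟩

theorem elems_restrict_of_le (f : VSet P) {r s : P} (h : r ≤ s) :
    (f.restrict r).elems s = f.elems s := by
  simp [elems_restrict, h]

theorem base_of_mem_Vp {f : VSet P} {p : P} (h : f ∈ Vp p) : f.base = p := by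
  obtain ⟨a, _, hb, rfl⟩ := h
  exact hb

theorem le_of_mem_elems {f : VSet P} {p s : P} (h : f ∈ Vp p) {x : VSet P}
    (hx : x ∈ f.elems s) : p ≤ s := by
  obtain ⟨⟨_, ι, el⟩, ha, rfl, rfl⟩ := h
  obtain ⟨i, -⟩ := hx
  exact ha.1 s ⟨i⟩

theorem mem_Vp_of_mem_elems {f : VSet P} {p q : P} (h : f ∈ Vp p) {x : VSet P}
    (hx : x ∈ f.elems q) : x ∈ Vp q := by
  obtain ⟨⟨_, ι, el⟩, ha, -, rfl⟩ := h
  obtain ⟨i, rfl⟩ := hx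
  exact ⟨el q i, (ha.2.1 q i).2, (ha.2.1 q i).1, rfl⟩

theorem restrict_eq_self {f : VSet P} {p : P} (h : f ∈ Vp p) : f.restrict p = f := by
  refine ext (by rw [base_restrict, base_of_mem_Vp h]) fun s => ?_
  rw [elems_restrict]
  ext x
  exact ⟨fun hx => hx.2, fun hx => ⟨le_of_mem_elems h hx, hx⟩⟩

theorem base_hatN (x : PSet) (p : P) : (hatN x p : VName P).base = p := by
  cases x; rfl

theorem elems_mk_hatN (x : PSet) (p r : P) :
    elems (⟦hatN x p⟧ : VSet P) r = {f | p ≤ r ∧ ∃ i, f = ⟦hatN (x.Func i) r⟧} := by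
  obtain ⟨α, A⟩ := x
  ext f
  constructor
  · rintro ⟨⟨i, ⟨h⟩⟩, rfl⟩
    exact ⟨h, i, rfl⟩
  · rintro ⟨h, i, rfl⟩
    exact ⟨⟨i, ⟨h⟩⟩, rfl⟩

theorem restrict_mk_hatN (x : PSet) {p r : P} (h : p ≤ r) :
    restrict (⟦hatN x p⟧ : VSet P) r = ⟦hatN x r⟧ := by
  refine ext (by rw [base_restrict]; exact (base_hatN x r).symm) fun s => ?_
  rw [elems_restrict, elems_mk_hatN, elems_mk_hatN]
  ext f
  exact ⟨fun ⟨hrs, _, hf⟩ => ⟨hrs, hf⟩, fun ⟨hrs, hf⟩ => ⟨hrs, h.trans hrs, hf⟩⟩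

theorem mk_hatN_eq_of_equiv {x y : PSet} (h : x.Equiv y) (p : P) :
    (⟦hatN x p⟧ : VSet P) = ⟦hatN y p⟧ := by
  induction x generalizing y p with | mk α A ih => ?_
  obtain ⟨hxy, hyx⟩ := PSet.equiv_iff.1 h
  refine ext ((base_hatN (PSet.mk α A) p).trans (base_hatN y p).symm) fun r => ?_
  rw [elems_mk_hatN, elems_mk_hatN]
  ext f
  constructor
  · rintro ⟨hpr, i, rfl⟩
    obtain ⟨j, hj⟩ := hxy i
    exact ⟨hpr, j, ih i hj r⟩
  · rintro ⟨hpr, j, rfl⟩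
    obtain ⟨i, hi⟩ := hyx j
    exact ⟨hpr, i, (ih i hi r).symm⟩

theorem goodN_hatN (x : PSet) (p : P) : (hatN x p : VName P).GoodN := by
  induction x generalizing p with | mk α A ih => ?_
  exact ⟨fun q hne => hne.elim fun i => i.2.down,
    fun q i => ⟨base_hatN _ _, ih i.1 q⟩,
    fun q i r hqr => ⟨⟨i.1, ⟨i.2.down.trans hqr⟩⟩, Quotient.exact (restrict_mk_hatN _ hqr)⟩⟩

theorem base_hatV (X : ZFSet) (p : P) : (hatV X p : VSet P).base = p :=
  base_hatN _ _

theorem elems_hatV (X : ZFSet) (p r : P) :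
    (hatV X p : VSet P).elems r = {f | p ≤ r ∧ ∃ b ∈ X, f = hatV b r} := by
  rw [hatV, elems_mk_hatN]
  ext f
  constructor
  · rintro ⟨hpr, i, rfl⟩
    refine ⟨hpr, ZFSet.mk (X.out.Func i), ?_, ?_⟩
    · simpa only [ZFSet.mk_out] using ZFSet.mk_mem_iff.2 (PSet.func_mem X.out i)
    · exact (mk_hatN_eq_of_equiv (Quotient.mk_out (s := PSet.setoid) _) r).symm
  · rintro ⟨hpr, b, hb, rfl⟩
    rw [← ZFSet.mk_out X, ← ZFSet.mk_out b, ZFSet.mk_mem_iff] at hb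
    obtain ⟨i, hi⟩ := hb
    exact ⟨hpr, i, mk_hatN_eq_of_equiv hi r⟩

theorem hatV_restrict (X : ZFSet) {p r : P} (h : p ≤ r) :
    (hatV X p : VSet P).restrict r = hatV X r :=
  restrict_mk_hatN _ h

theorem hatV_mem_Vp (X : ZFSet) (p : P) : (hatV X p : VSet P) ∈ Vp p :=
  ⟨hatN X.out p, goodN_hatN _ _, base_hatN _ _, rfl⟩

theorem hatV_injective (p : P) : Function.Injective fun X : ZFSet => (hatV X p : VSet P) := by
  intro X
  induction X using ZFSet.inductionOn with | _ X ih => ?_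
  intro Y h
  have hXY (c : ZFSet) : (∃ b ∈ X, hatV c p = hatV b p) ↔ ∃ b ∈ Y, hatV c p = hatV b p := by
    simpa [elems_hatV] using Set.ext_iff.1 (congrArg (elems · p) h) (hatV c p)
  ext z
  constructor
  · intro hz
    obtain ⟨b, hb, e⟩ := (hXY z).1 ⟨z, hz, rfl⟩
    rwa [ih z hz e]
  · intro hz
    obtain ⟨b, hb, e⟩ := (hXY z).2 ⟨z, hz, rfl⟩
    rwa [← ih b hb e.symm]

def upairV (q : P) (A B : VSet P) : VSet P := ⟦upairN q A.out B.out⟧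

theorem elems_upairV (q r : P) (A B : VSet P) :
    (upairV q A B).elems r = {f | q ≤ r ∧ (f = A.restrict r ∨ f = B.restrict r)} := by
  ext f
  rw [restrict_eq_mk_out A, restrict_eq_mk_out B]
  constructor
  · rintro ⟨⟨_ | _, ⟨h⟩⟩, rfl⟩
    exacts [⟨h, Or.inr rfl⟩, ⟨h, Or.inl rfl⟩]
  · rintro ⟨h, rfl | rfl⟩
    exacts [⟨⟨true, ⟨h⟩⟩, rfl⟩, ⟨⟨false, ⟨h⟩⟩, rfl⟩]

theorem elems_pairV (q r : P) (A B : VSet P) :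
    (pairV q A B).elems r =
      {f | q ≤ r ∧ (f = (upairV q A A).restrict r ∨ f = (upairV q A B).restrict r)} := by
  ext f
  constructor
  · rintro ⟨⟨_ | _, ⟨h⟩⟩, rfl⟩
    exacts [⟨h, Or.inr rfl⟩, ⟨h, Or.inl rfl⟩]
  · rintro ⟨h, rfl | rfl⟩
    exacts [⟨⟨true, ⟨h⟩⟩, rfl⟩, ⟨⟨false, ⟨h⟩⟩, rfl⟩]

theorem image_elems_elems_pairV (q : P) (A B : VSet P) :
    (elems · q) '' (pairV q A B).elems q = {{A.restrict q}, {A.restrict q, B.restrict q}} := by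
  have hpair (X Y : VSet P) : {f | q ≤ q ∧ (f = X ∨ f = Y)} = {X, Y} := by ext; simp
  rw [elems_pairV, hpair, Set.image_pair, elems_restrict_of_le _ le_rfl,
    elems_restrict_of_le _ le_rfl, elems_upairV, elems_upairV, hpair, hpair, Set.pair_eq_singleton]

theorem restrict_eq_of_pairV_eq {q : P} {A B A' B' : VSet P} (h : pairV q A B = pairV q A' B') :
    A.restrict q = A'.restrict q ∧ B.restrict q = B'.restrict q :=
  Set.kuratowski_pair_inj <| by rw [← image_elems_elems_pairV, h, image_elems_elems_pairV]

theorem upairV_hatV_restrict {a b : ZFSet} {q r : P} (h : q ≤ r) :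
    (upairV q (hatV a q) (hatV b q)).restrict r = hatV {a, b} r := by
  refine ext (by rw [base_restrict, base_hatV]) fun s => ?_
  rw [elems_restrict, elems_upairV, elems_hatV]
  ext f
  refine and_congr_right fun hrs => ?_
  rw [hatV_restrict a (h.trans hrs), hatV_restrict b (h.trans hrs)]
  simp [h.trans hrs]

theorem hatV_pair (a b : ZFSet) (q : P) :
    (hatV (a.pair b) q : VSet P) = pairV q (hatV a q) (hatV b q) := by
  refine ext (by rw [base_hatV]; rfl) fun r => ?_
  rw [elems_hatV, elems_pairV]
  ext f
  refine and_congr_right fun hqr => ?_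
  rw [upairV_hatV_restrict hqr, upairV_hatV_restrict hqr, ZFSet.pair_eq_singleton]
  simp [ZFSet.pair]

theorem exists_of_pairV_mem_elems_hatV_prod {A B : ZFSet} {q : P} {x y : VSet P}
    (hx : x ∈ Vp q) (hy : y ∈ Vp q) (h : pairV q x y ∈ (hatV (A.prod B) q).elems q) :
    ∃ a ∈ A, ∃ b ∈ B, x = hatV a q ∧ y = hatV b q := by
  rw [elems_hatV] at h
  obtain ⟨-, c, hc, hxy⟩ := h
  obtain ⟨a, ha, b, hb, rfl⟩ := ZFSet.mem_prod.1 hc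
  rw [hatV_pair] at hxy
  obtain ⟨hxa, hyb⟩ := restrict_eq_of_pairV_eq hxy
  rw [restrict_eq_self hx, hatV_restrict _ le_rfl] at hxa
  rw [restrict_eq_self hy, hatV_restrict _ le_rfl] at hyb
  exact ⟨a, ha, b, hb, hxa, hyb⟩

end VSet

namespace Forces

open VSet

variable {P : Type} [Preorder P] {n : ℕ} {q : P} {s : Fin n → VSet P}

theorem mem_of_fSub {i j : Fin n} (h : Forces q (SetFml.fSub i j) s) {x : VSet P}
    (hx : x ∈ Vp q) (hxi : x ∈ (s i).elems q) : x ∈ (s j).elems q := by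
  have := h q le_rfl x hx q le_rfl
  simp only [Forces, Fin.cons_zero, Fin.cons_succ, restrict_eq_self hx,
    elems_restrict_of_le _ le_rfl] at this
  exact this hxi

theorem exists_pairV_mem_of_fOnto {f b : Fin n} (h : Forces q (SetFml.fOnto f b) s)
    {y : VSet P} (hy : y ∈ Vp q) (hyb : y ∈ (s b).elems q) :
    ∃ x ∈ Vp q, pairV q x y ∈ (s f).elems q := by
  have := h q le_rfl y hy q le_rfl
  simp only [Forces, Fin.cons_zero, Fin.cons_one, Fin.cons_succ, restrict_eq_self hy,
    elems_restrict_of_le _ le_rfl] at this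
  exact this hyb

theorem eq_of_fIsFunction {f : Fin n} (h : Forces q (SetFml.fIsFunction f) s)
    {x y z : VSet P} (hx : x ∈ Vp q) (hy : y ∈ Vp q) (hz : z ∈ Vp q)
    (hxy : pairV q x y ∈ (s f).elems q) (hxz : pairV q x z ∈ (s f).elems q) : y = z := by
  have := h.2 q le_rfl x hx q le_rfl y hy q le_rfl z hz q le_rfl
  simp only [Forces, ← Fin.succ_one_eq_two, Fin.cons_zero, Fin.cons_one, Fin.cons_succ, restrict_eq_self hx, restrict_eq_self hy,
    restrict_eq_self hz, elems_restrict_of_le _ le_rfl] at this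
  exact this ⟨hxy, hxz⟩

end Forces

open VSet in
theorem exists_injective_of_forces_surjection {P : Type} [Preorder P] {q : P} {A B : ZFSet}
    (h : Forces q (.ex (.and (SetFml.fSub 0 1) (.and (SetFml.fIsFunction 0) (SetFml.fOnto 0 2))))
      ![hatV (A.prod B) q, hatV B q]) :
    ∃ g : {b // b ∈ B} → {a // a ∈ A}, Function.Injective g := by
  obtain ⟨f, hf, hsub, hfun, honto⟩ := h
  have hpreimage (b : ZFSet) (hb : b ∈ B) : ∃ a ∈ A, pairV q (hatV a q) (hatV b q) ∈ f.elems q := by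
    obtain ⟨x, hx, hxb⟩ := honto.exists_pairV_mem_of_fOnto (hatV_mem_Vp b q)
      (show hatV b q ∈ (hatV B q).elems q by rw [elems_hatV]; exact ⟨le_rfl, b, hb, rfl⟩)
    have hprod := hsub.mem_of_fSub (mem_Vp_of_mem_elems hf hxb) hxb
    obtain ⟨a, ha, b', -, hxa, -⟩ := exists_of_pairV_mem_elems_hatV_prod hx (hatV_mem_Vp b q) hprod
    exact ⟨a, ha, hxa ▸ hxb⟩
  choose g hgA hgf using hpreimage
  refine ⟨fun b => ⟨g b b.2, hgA b b.2⟩, fun b₁ b₂ hg => Subtype.ext (hatV_injective q ?_)⟩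
  have hg : g b₁ b₁.2 = g b₂ b₂.2 := congrArg Subtype.val hg
  exact hfun.eq_of_fIsFunction (hatV_mem_Vp _ q) (hatV_mem_Vp _ q) (hatV_mem_Vp _ q)
    (hgf b₁ b₁.2) (hg ▸ hgf b₂ b₂.2)

theorem forces_no_surjection_hatV {P : Type} [Preorder P] (p : P) {A B : ZFSet}
    (hBA : ¬ ∃ g : {b // b ∈ B} → {a // a ∈ A}, Function.Injective g) :
    Forces p (.not (.ex (.and (SetFml.fSub 0 1) (.and (SetFml.fIsFunction 0) (SetFml.fOnto 0 2)))))
      ![VSet.hatV (A.prod B) p, VSet.hatV B p] := by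
  intro q hpq hq
  refine hBA (exists_injective_of_forces_surjection (q := q) ?_)
  convert hq using 1
  funext i
  fin_cases i <;> exact (VSet.hatV_restrict _ hpq).symm

/-- **No forced surjection from `ℕ` onto `P(ℕ)` (nor from `P(ℕ)` onto `P(P(ℕ))`).**
For every `p`:  `⊩ₚ ¬∃f(f ⊆ (ℕ×P(ℕ))^(p) ∧ f is a function ∧ f is onto)`, and
likewise one level up. -/
theorem no_forced_surjection {P : Type} [PartialOrder P] (p : P) :
    Forces p
      (.not (.ex (.and (SetFml.fSub 0 1)
        (.and (SetFml.fIsFunction 0) (SetFml.fOnto 0 2)))))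
      ![VSet.hatV (ZFSet.omega.prod (ZFSet.powerset ZFSet.omega)) p,
        VSet.hatV (ZFSet.powerset ZFSet.omega) p] ∧
    Forces p
      (.not (.ex (.and (SetFml.fSub 0 1)
        (.and (SetFml.fIsFunction 0) (SetFml.fOnto 0 2)))))
      ![VSet.hatV ((ZFSet.powerset ZFSet.omega).prod
          (ZFSet.powerset (ZFSet.powerset ZFSet.omega))) p,
        VSet.hatV (ZFSet.powerset (ZFSet.powerset ZFSet.omega)) p] :=
  ⟨forces_no_surjection_hatV p (ZFSet.not_exists_injective_powerset _),
    forces_no_surjection_hatV p (ZFSet.not_exists_injective_powerset _)⟩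

end
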